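/- arXiv:1911.11436 — 4 statements merged into one kernel-verified Lean document; each statement's English description precedes it below -/
import Mathlib

section
/- In a generalized topological space, an arbitrary intersection of sλ-closed sets is sλ-closed, and consequently an arbitrary union of sλ-open sets is sλ-open; hence the sλ-open sets form a generalized topology. -/
open Set

variable {X : Type*}

def IsGT (μ : Set (Set X)) : Prop :=
  ∅ ∈ μ ∧ ∀ S : Set (Set X), S ⊆ μ → ⋃₀ S ∈ μ

def muInt (μ : Set (Set X)) (A : Set X) : Set X := ⋃₀ {U | U ∈ μ ∧ U ⊆ A}

def muCl (μ : Set (Set X)) (A : Set X) : Set X := ⋂₀ {F | Fᶜ ∈ μ ∧ A ⊆ F}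

def sOpen (μ : Set (Set X)) (A : Set X) : Prop := A ⊆ muCl μ (muInt μ A)

def sClosed (μ : Set (Set X)) (A : Set X) : Prop := sOpen μ Aᶜ

def sInt (μ : Set (Set X)) (A : Set X) : Set X := ⋃₀ {U | sOpen μ U ∧ U ⊆ A}

def sCl (μ : Set (Set X)) (A : Set X) : Set X := ⋂₀ {F | sClosed μ F ∧ A ⊆ F}

def sWedge (μ : Set (Set X)) (A : Set X) : Set X := ⋂₀ {U | sOpen μ U ∧ A ⊆ U}

def sVee (μ : Set (Set X)) (A : Set X) : Set X := ⋃₀ {F | sClosed μ F ∧ F ⊆ A}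

def sLambdaClosed (μ : Set (Set X)) (A : Set X) : Prop :=
  ∃ K P : Set X, K = sWedge μ K ∧ sClosed μ P ∧ A = K ∩ P

def sLambdaOpen (μ : Set (Set X)) (A : Set X) : Prop := sLambdaClosed μ Aᶜ

def sclL (μ : Set (Set X)) (A : Set X) : Set X := ⋂₀ {F | sLambdaClosed μ F ∧ A ⊆ F}

def sIntL (μ : Set (Set X)) (A : Set X) : Set X := ⋃₀ {U | sLambdaOpen μ U ∧ U ⊆ A}

def sWedgeL (μ : Set (Set X)) (A : Set X) : Set X := ⋂₀ {U | sLambdaOpen μ U ∧ A ⊆ U}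

def sVeeL (μ : Set (Set X)) (A : Set X) : Set X := ⋃₀ {F | sLambdaClosed μ F ∧ F ⊆ A}

def sgClosed (μ : Set (Set X)) (A : Set X) : Prop :=
  ∀ U : Set X, sLambdaOpen μ U → A ⊆ U → sclL μ A ⊆ U

def sgOpen (μ : Set (Set X)) (A : Set X) : Prop := sgClosed μ Aᶜ

def sBetaClosed (μ : Set (Set X)) (A : Set X) : Prop :=
  ∃ H Q : Set X, H = sWedgeL μ H ∧ sLambdaClosed μ Q ∧ A = H ∩ Q

def sT0 (μ : Set (Set X)) : Prop :=
  ∀ x y : X, x ≠ y → ∃ U : Set X, sLambdaOpen μ U ∧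
    ((x ∈ U ∧ y ∉ U) ∨ (y ∈ U ∧ x ∉ U))

def sT1 (μ : Set (Set X)) : Prop :=
  ∀ x y : X, x ≠ y → ∃ U V : Set X, sLambdaOpen μ U ∧ sLambdaOpen μ V ∧
    x ∈ U ∧ y ∉ U ∧ y ∈ V ∧ x ∉ V


lemma muInt_mono (μ : Set (Set X)) {A B : Set X} (h : A ⊆ B) : muInt μ A ⊆ muInt μ B :=
  sUnion_subset_sUnion (fun U hU => ⟨hU.1, hU.2.trans h⟩)

lemma muCl_mono (μ : Set (Set X)) {A B : Set X} (h : A ⊆ B) : muCl μ A ⊆ muCl μ B :=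
  sInter_subset_sInter (fun F hF => ⟨hF.1, h.trans hF.2⟩)

lemma sOpen_sUnion (μ : Set (Set X)) {S : Set (Set X)} (h : ∀ A ∈ S, sOpen μ A) :
    sOpen μ (⋃₀ S) := by
  intro x hx
  obtain ⟨A, hA, hxA⟩ := hx
  exact muCl_mono μ (muInt_mono μ (subset_sUnion_of_mem hA)) (h A hA hxA)

lemma subset_sWedge (μ : Set (Set X)) (A : Set X) : A ⊆ sWedge μ A :=
  subset_sInter (fun U hU => hU.2)

lemma sWedge_mono (μ : Set (Set X)) {A B : Set X} (h : A ⊆ B) : sWedge μ A ⊆ sWedge μ B :=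
  sInter_subset_sInter (fun U hU => ⟨hU.1, h.trans hU.2⟩)

lemma sWedge_sInter (μ : Set (Set X)) {S : Set (Set X)} (h : ∀ K ∈ S, K = sWedge μ K) :
    (⋂₀ S) = sWedge μ (⋂₀ S) := by
  refine le_antisymm (subset_sWedge μ _) (subset_sInter fun K hK => ?_)
  calc sWedge μ (⋂₀ S) ⊆ sWedge μ K := sWedge_mono μ (sInter_subset_of_mem hK)
    _ = K := (h K hK).symm

lemma sClosed_sInter (μ : Set (Set X)) {S : Set (Set X)} (h : ∀ P ∈ S, sClosed μ P) :
    sClosed μ (⋂₀ S) := by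
  unfold sClosed
  rw [compl_sInter]
  exact sOpen_sUnion μ (by rintro A ⟨P, hP, rfl⟩; exact h P hP)

theorem stmt5 (μ : Set (Set X)) (hμ : IsGT μ) :
    (∀ S : Set (Set X), (∀ A ∈ S, sLambdaClosed μ A) → sLambdaClosed μ (⋂₀ S)) ∧
    (∀ S : Set (Set X), (∀ A ∈ S, sLambdaOpen μ A) → sLambdaOpen μ (⋃₀ S)) ∧
    IsGT {A : Set X | sLambdaOpen μ A} := by
  have hcl : ∀ S : Set (Set X), (∀ A ∈ S, sLambdaClosed μ A) → sLambdaClosed μ (⋂₀ S) := by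
    intro S hS
    choose K P hK hP hKP using hS
    refine ⟨⋂₀ {T | ∃ A : Set X, ∃ hA : A ∈ S, T = K A hA},
            ⋂₀ {T | ∃ A : Set X, ∃ hA : A ∈ S, T = P A hA}, ?_, ?_, ?_⟩
    · exact sWedge_sInter μ (by rintro T ⟨A, hA, rfl⟩; exact hK A hA)
    · exact sClosed_sInter μ (by rintro T ⟨A, hA, rfl⟩; exact hP A hA)
    · ext x
      simp only [mem_inter_iff, mem_sInter, mem_setOf_eq]
      constructor
      · intro hx
        exact ⟨by rintro T ⟨A, hA, rfl⟩; exact ((hKP A hA ▸ hx A hA) : _).1,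
               by rintro T ⟨A, hA, rfl⟩; exact ((hKP A hA ▸ hx A hA) : _).2⟩
      · rintro ⟨h1, h2⟩ A hA
        rw [hKP A hA]
        exact ⟨h1 _ ⟨A, hA, rfl⟩, h2 _ ⟨A, hA, rfl⟩⟩
  have hop : ∀ S : Set (Set X), (∀ A ∈ S, sLambdaOpen μ A) → sLambdaOpen μ (⋃₀ S) := by
    intro S hS
    unfold sLambdaOpen
    rw [compl_sUnion]
    exact hcl _ (by rintro T ⟨A, hA, rfl⟩; exact hS A hA)
  refine ⟨hcl, hop, ?_, ?_⟩
  · show sLambdaClosed μ (∅ : Set X)ᶜ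
    rw [compl_empty]
    have := hcl ∅ (by simp)
    simpa using this
  · intro S hS
    exact hop S hS
end

section
/- For each point x in a generalized topological space (X, μ), the singleton {x} is either sλ-closed, or X ∖ {x} is sg_λ-closed (equivalently {x} is sg_λ-open). -/
open Set

variable {X : Type*}

theorem stmt8 (μ : Set (Set X)) (hμ : IsGT μ) (x : X) :
    sLambdaClosed μ {x} ∨ sgClosed μ ({x}ᶜ : Set X) := by
  by_cases h : sLambdaClosed μ {x}
  · exact Or.inl h
  · refine Or.inr (fun U hU hsub => ?_)
    by_cases hx : x ∈ U
    · have : U = Set.univ := by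
        ext y; simp only [Set.mem_univ, iff_true]
        by_cases hy : y = x
        · exact hy ▸ hx
        · exact hsub hy
      rw [this]; intro _ _; trivial
    · exfalso
      apply h
      have : Uᶜ = {x} := by
        ext y
        constructor
        · intro hy
          by_contra hne
          exact hy (hsub hne)
        · intro hy
          simp only [Set.mem_singleton_iff] at hy
          exact hy ▸ hx
      exact this ▸ hU
end

section
/- If A is sg_λ-closed and A ⊆ B ⊆ scl_λ(A) in a generalized topological space, then B is sg_λ-closed. -/
open Set

variable {X : Type*}

theorem stmt10 (μ : Set (Set X)) (hμ : IsGT μ) (A B : Set X)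
    (hA : sgClosed μ A) (hAB : A ⊆ B) (hB : B ⊆ sclL μ A) :
    sgClosed μ B := by
  intro U hU hBU
  have h1 : sclL μ A ⊆ U := hA U hU (hAB.trans hBU)
  have h2 : sclL μ B ⊆ sclL μ A := by
    intro x hx
    intro F hF
    exact hx F ⟨hF.1, hB.trans (fun y hy => hy F ⟨hF.1, hF.2⟩)⟩
  exact h2.trans h1
end

section
/- If A is a s∧_λ-set (i.e., A equals the intersection of all sλ-open sets containing A), then A is sg_λ-closed if and only if A is sλ-closed. Moreover, if sA_λ^∧ is sg_λ-closed, then A is sg_λ-closed. -/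
open Set

variable {X : Type*}

lemma sOpen_iUnion (μ : Set (Set X)) {ι : Sort*} (U : ι → Set X)
    (h : ∀ i, sOpen μ (U i)) : sOpen μ (⋃ i, U i) := by
  intro x hx
  obtain ⟨i, hxi⟩ := mem_iUnion.mp hx
  exact muCl_mono μ (muInt_mono μ (subset_iUnion U i)) (h i hxi)

lemma sClosed_iInter (μ : Set (Set X)) {ι : Sort*} (P : ι → Set X)
    (h : ∀ i, sClosed μ (P i)) : sClosed μ (⋂ i, P i) := by
  unfold sClosed
  rw [compl_iInter]
  exact sOpen_iUnion μ _ h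

lemma sLambdaClosed_sInter (μ : Set (Set X)) {S : Set (Set X)}
    (h : ∀ F ∈ S, sLambdaClosed μ F) : sLambdaClosed μ (⋂₀ S) := by
  choose K P hK hP hKP using fun F : S => h F F.2
  refine ⟨⋂ F : S, K F, ⋂ F : S, P F, ?_, ?_, ?_⟩
  · refine subset_antisymm (subset_sWedge μ _) (subset_iInter fun F => ?_)
    calc sWedge μ (⋂ G : S, K G) ⊆ sWedge μ (K F) := sWedge_mono μ (iInter_subset _ F)
      _ = K F := (hK F).symm
  · exact sClosed_iInter μ _ fun F => hP F
  · ext x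
    simp only [mem_sInter, mem_inter_iff, mem_iInter]
    constructor
    · intro hx
      constructor <;> intro F <;>
        · have hxF := hx F F.2
          rw [hKP F] at hxF
          first
          | exact hxF.1
          | exact hxF.2
    · rintro ⟨h1, h2⟩ F hF
      have : x ∈ K ⟨F, hF⟩ ∩ P ⟨F, hF⟩ := ⟨h1 ⟨F, hF⟩, h2 ⟨F, hF⟩⟩
      rwa [← hKP ⟨F, hF⟩] at this

lemma subset_sclL (μ : Set (Set X)) (A : Set X) : A ⊆ sclL μ A :=
  fun _ hx F hF => hF.2 hx

lemma sclL_mono (μ : Set (Set X)) {A B : Set X} (h : A ⊆ B) : sclL μ A ⊆ sclL μ B :=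
  fun _ hx F hF => hx F ⟨hF.1, h.trans hF.2⟩

lemma sLambdaClosed_sclL (μ : Set (Set X)) (A : Set X) : sLambdaClosed μ (sclL μ A) :=
  sLambdaClosed_sInter μ (fun _ hF => hF.1)

lemma subset_sWedgeL (μ : Set (Set X)) (A : Set X) : A ⊆ sWedgeL μ A :=
  fun _ hx U hU => hU.2 hx

theorem stmt12 (μ : Set (Set X)) (hμ : IsGT μ) (A : Set X) :
    (A = sWedgeL μ A → (sgClosed μ A ↔ sLambdaClosed μ A)) ∧
    (sgClosed μ (sWedgeL μ A) → sgClosed μ A) := by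
  constructor
  · intro hA
    constructor
    · intro hg
      have h1 : sclL μ A ⊆ sWedgeL μ A := fun x hx U hU => hg U hU.1 hU.2 hx
      have h2 : sclL μ A = A := subset_antisymm (h1.trans hA.symm.subset) (subset_sclL μ A)
      rw [← h2]
      exact sLambdaClosed_sclL μ A
    · intro hc U _ hAU x hx
      exact hAU (hx A ⟨hc, subset_rfl⟩)
  · intro hg U hU hAU
    have hW : sWedgeL μ A ⊆ U := fun x hx => hx U ⟨hU, hAU⟩
    exact (sclL_mono μ (subset_sWedgeL μ A)).trans (hg U hU hW)
end
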